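/- arXiv:1405.7616 — 3 statements merged into one kernel-verified Lean document; each statement's English description precedes it below -/
import Mathlib

section
/- Let d ≥ 1, let U ⊆ ℝ^d be open and convex, let f ∈ C²(U, ℝ^d), η ∈ C²(U, ℝ) and q ∈ C¹(U, ℝ) satisfy the compatibility condition Dq(u) = Dη(u) Df(u) for all u ∈ U (the gradient row vector of q equals the gradient row vector of η multiplied by the Jacobian matrix of f). Then for every u ∈ U the matrix identity (Df(u))ᵀ D²η(u) = D²η(u) Df(u) holds, where D²η(u) is the Hessian matrix of η at u. -/
/-!
Differentiating `Dq = Dη ∘ Df` once more gives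
`D²q(u)(v, w) = Dη(u) D²f(u)(v, w) + D²η(u)(v, Df(u) w)`.
The left side and the first term on the right are symmetric in `(v, w)` (Schwarz), hence so is
`D²η(u)(v, Df(u) w)`; with the symmetry of `D²η(u)` this is the relation
`D²η(u)(Df(u) v, w) = D²η(u)(v, Df(u) w)`.
-/

open Filter Topology ContinuousLinearMap

section

variable {𝕜 E G : Type*} [NontriviallyNormedField 𝕜]
  [NormedAddCommGroup E] [NormedSpace 𝕜 E] [NormedAddCommGroup G] [NormedSpace 𝕜 G]

theorem ContDiffAt.differentiableAt_fderiv {f : E → G} {u : E} (hf : ContDiffAt 𝕜 2 f u) :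
    DifferentiableAt 𝕜 (fderiv 𝕜 f) u :=
  (hf.fderiv_right (m := 1) le_rfl).differentiableAt one_ne_zero

theorem fderiv_fderiv_apply_const {η : E → G} {u : E}
    (hη : DifferentiableAt 𝕜 (fderiv 𝕜 η) u) (v w : E) :
    fderiv 𝕜 (fun x => fderiv 𝕜 η x v) u w = fderiv 𝕜 (fderiv 𝕜 η) u w v := by
  simp [fderiv_clm_apply hη (differentiableAt_const v)]

theorem fderiv_fderiv_apply_fderiv_comm_of_hasFDerivAt_comp [IsRCLikeNormedField 𝕜]
    {η q : E → G} {f : E → E} {u : E} (hη : ContDiffAt 𝕜 2 η u) (hf : ContDiffAt 𝕜 2 f u)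
    (hq : ∀ᶠ y in 𝓝 u, HasFDerivAt q (fderiv 𝕜 η y ∘L fderiv 𝕜 f y) y) (v w : E) :
    fderiv 𝕜 (fderiv 𝕜 η) u (fderiv 𝕜 f u v) w = fderiv 𝕜 (fderiv 𝕜 η) u v (fderiv 𝕜 f u w) := by
  have hq_symm := second_derivative_symmetric_of_eventually hq
    (hη.differentiableAt_fderiv.hasFDerivAt.clm_comp hf.differentiableAt_fderiv.hasFDerivAt) w v
  simp only [add_apply, coe_comp, Function.comp_apply, compL_apply, flip_apply] at hq_symm
  rw [(hf.isSymmSndFDerivAt (by simp)).eq w v, add_left_cancel_iff] at hq_symm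
  rw [(hη.isSymmSndFDerivAt (by simp)).eq, hq_symm]

end

theorem entropy_flux_implies_hessian_symmetry_general
    (d : ℕ)
    (U : Set (EuclideanSpace ℝ (Fin d))) (hUopen : IsOpen U)
    (f : EuclideanSpace ℝ (Fin d) → EuclideanSpace ℝ (Fin d))
    (η q : EuclideanSpace ℝ (Fin d) → ℝ)
    (hf : ContDiffOn ℝ 2 f U) (hη : ContDiffOn ℝ 2 η U) (hq : ContDiffOn ℝ 1 q U)
    (hcompat : ∀ u ∈ U, fderiv ℝ q u = (fderiv ℝ η u).comp (fderiv ℝ f u)) :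
    ∀ u ∈ U, ∀ v w : EuclideanSpace ℝ (Fin d),
      fderiv ℝ (fun x => fderiv ℝ η x (fderiv ℝ f u v)) u w =
        fderiv ℝ (fun x => fderiv ℝ η x v) u (fderiv ℝ f u w) := by
  intro u hu v w
  have hUu : U ∈ 𝓝 u := hUopen.mem_nhds hu
  have hηu : ContDiffAt ℝ 2 η u := hη.contDiffAt hUu
  have hflux : ∀ᶠ y in 𝓝 u, HasFDerivAt q (fderiv ℝ η y ∘L fderiv ℝ f y) y := by
    filter_upwards [hUu] with y hy
    rw [← hcompat y hy]
    exact ((hq.differentiableOn one_ne_zero).differentiableAt (hUopen.mem_nhds hy)).hasFDerivAt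
  have hηu_symm : IsSymmSndFDerivAt ℝ η u := hηu.isSymmSndFDerivAt (by simp)
  rw [fderiv_fderiv_apply_const hηu.differentiableAt_fderiv,
    fderiv_fderiv_apply_const hηu.differentiableAt_fderiv, hηu_symm.eq,
    fderiv_fderiv_apply_fderiv_comm_of_hasFDerivAt_comp hηu (hf.contDiffAt hUu) hflux,
    hηu_symm.eq]

/-- **Existence of an entropy flux implies the symmetry relation (2.9)**:
if `Dq(u) = Dη(u) Df(u)` on the open convex set `U`, then
`(Df(u))ᵀ D²η(u) = D²η(u) Df(u)` for every `u ∈ U`, expressed as the bilinear identity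
`D²η(u)(Df(u)v, w) = D²η(u)(v, Df(u)w)` for all directions `v, w`. -/
theorem entropy_flux_implies_hessian_symmetry
    (d : ℕ) (hd : 1 ≤ d)
    (U : Set (EuclideanSpace ℝ (Fin d))) (hUopen : IsOpen U) (hUconv : Convex ℝ U)
    (f : EuclideanSpace ℝ (Fin d) → EuclideanSpace ℝ (Fin d))
    (η q : EuclideanSpace ℝ (Fin d) → ℝ)
    (hf : ContDiffOn ℝ 2 f U) (hη : ContDiffOn ℝ 2 η U) (hq : ContDiffOn ℝ 1 q U)
    (hcompat : ∀ u ∈ U, fderiv ℝ q u = (fderiv ℝ η u).comp (fderiv ℝ f u)) :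
    ∀ u ∈ U, ∀ v w : EuclideanSpace ℝ (Fin d),
      fderiv ℝ (fun x => fderiv ℝ η x (fderiv ℝ f u v)) u w =
        fderiv ℝ (fun x => fderiv ℝ η x v) u (fderiv ℝ f u w) :=
  entropy_flux_implies_hessian_symmetry_general d U hUopen f η q hf hη hq hcompat
end

section
/- Fix d ≥ 1, a partition 0 = x₀ < x₁ < ⋯ < x_N = 1 of I = [0,1] with cells I_n = [x_n, x_{n+1}], an integer p ≥ 1, an open convex set U ⊆ ℝ^d, a C¹ function f : U → ℝ^d, a function w : U × U → U, and u_h ∈ 𝕍_p taking values in U. Suppose f̂ ∈ 𝕍_{p+1} satisfies: (a) Σ_{n=0}^{N−1} ∫_{I_n} ∂ₓf̂ · φ dx = Σ_{n=0}^{N−1} ∫_{I_n} ∂ₓ(f∘u_h) · φ dx + Σ_{n=0}^{N−1} ( f(w(u_h(x_n^−), u_h(x_n^+))) · ⟦φ⟧_n − ⟦(f∘u_h) · φ⟧_n ) for all φ ∈ 𝕍_p, and (b) f̂(x_n^+) = f(w(u_h(x_n^−), u_h(x_n^+))) for all n = 0, …, N−1 (indices taken modulo N for periodicity, so u_h(x₀^−)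 := u_h(x_N^−) and u_h(x_N^+) := u_h(x₀^+)). Then f̂ is continuous on the periodic interval, with f̂(x_{n+1}^−) = f(w(u_h(x_{n+1}^−), u_h(x_{n+1}^+))) for each n, and f̂ satisfies the orthogonality property Σ_{n=0}^{N−1} ∫_{I_n} (f̂ − f∘u_h) · φ dx = 0 for all φ ∈ 𝕍_{p−1}. -/
/-- evaluation of a vector of polynomials -/
noncomputable def pev {d : ℕ} (P : Fin d → Polynomial ℝ) (x : ℝ) : Fin d → ℝ :=
  fun i => (P i).eval x

/-- value from the left of a piecewise polynomial (cells `I_n = [xp n, xp (n+1)]`,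
`n = 0, …, N-1`) at the node `xp n`, with periodic wraparound at `n = 0`. -/
noncomputable def nodeMinus {d : ℕ} (N : ℕ) (xp : ℕ → ℝ)
    (g : ℕ → Fin d → Polynomial ℝ) (n : ℕ) : Fin d → ℝ :=
  if n = 0 then pev (g (N - 1)) (xp N) else pev (g (n - 1)) (xp n)

/-- value from the right of a piecewise polynomial at the node `xp n`, with periodic
wraparound at `n = N`. -/
noncomputable def nodePlus {d : ℕ} (N : ℕ) (xp : ℕ → ℝ)
    (g : ℕ → Fin d → Polynomial ℝ) (n : ℕ) : Fin d → ℝ :=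
  if n = N then pev (g 0) (xp 0) else pev (g n) (xp n)

/-- Euclidean dot product on `ℝ^d` -/
def dotR {d : ℕ} (a b : Fin d → ℝ) : ℝ := ∑ i, a i * b i

/-!
Test (4.4) against a piecewise polynomial `Φ` and integrate by parts on each cell. By (4.5) the
left-endpoint terms cancel against the jump terms, and after a cyclic shift of the node sum what
remains is `Σₙ (f̂(x_{n+1}^-) - Fₙ₊₁)·Φ(x_{n+1}^-) = Σₙ ∫_{Iₙ} (f̂ - f∘u_h)·Φ'`, with `Fₙ` the
numerical flux at `xₙ`. Choosing `Φ` piecewise constant and equal to the endpoint residual makes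
the left side a sum of squares, which gives the endpoint values and hence continuity; choosing
`Φ` an antiderivative of `φ ∈ 𝕍_{p-1}` vanishing at every `x_{n+1}^-` gives orthogonality.
-/

open Finset Polynomial intervalIntegral

theorem sum_range_succ_eq_of_periodic {M : Type*} [AddCancelCommMonoid M] {N : ℕ} {A : ℕ → M}
    (hA : A N = A 0) : ∑ n ∈ range N, A (n + 1) = ∑ n ∈ range N, A n := by
  apply add_right_cancel (b := A 0)
  rw [← sum_range_succ', sum_range_succ, hA]

theorem HasDerivAt.dotProduct {𝕜 ι : Type*} [NontriviallyNormedField 𝕜] [Fintype ι]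
    {g Φ : 𝕜 → ι → 𝕜} {g' Φ' : ι → 𝕜} {x : 𝕜} (hg : HasDerivAt g g' x)
    (hΦ : HasDerivAt Φ Φ' x) :
    HasDerivAt (fun y => g y ⬝ᵥ Φ y) (g' ⬝ᵥ Φ x + g x ⬝ᵥ Φ') x := by
  simpa only [_root_.dotProduct, ← sum_add_distrib] using
    HasDerivAt.fun_sum fun i _ => (hasDerivAt_pi.1 hg i).fun_mul (hasDerivAt_pi.1 hΦ i)

theorem ContinuousOn.dotProduct {α 𝕜 ι : Type*} [TopologicalSpace α] [NormedField 𝕜] [Fintype ι]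
    {s : Set α} {g Φ : α → ι → 𝕜} (hg : ContinuousOn g s) (hΦ : ContinuousOn Φ s) :
    ContinuousOn (fun y => g y ⬝ᵥ Φ y) s := by
  simp only [_root_.dotProduct]
  fun_prop

theorem integral_dotProduct_deriv_eq {ι : Type*} [Fintype ι] {a b : ℝ}
    {g g' Φ Φ' : ℝ → ι → ℝ}
    (hg : ∀ x ∈ Set.uIcc a b, HasDerivAt g (g' x) x)
    (hΦ : ∀ x ∈ Set.uIcc a b, HasDerivAt Φ (Φ' x) x)
    (hg' : ContinuousOn g' (Set.uIcc a b)) (hΦ' : ContinuousOn Φ' (Set.uIcc a b)) :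
    ∫ x in a..b, g' x ⬝ᵥ Φ x = g b ⬝ᵥ Φ b - g a ⬝ᵥ Φ a - ∫ x in a..b, g x ⬝ᵥ Φ' x := by
  have hint₁ : IntervalIntegrable (fun x => g' x ⬝ᵥ Φ x) MeasureTheory.volume a b :=
    (hg'.dotProduct fun x hx => (hΦ x hx).continuousAt.continuousWithinAt).intervalIntegrable
  have hint₂ : IntervalIntegrable (fun x => g x ⬝ᵥ Φ' x) MeasureTheory.volume a b :=
    (ContinuousOn.dotProduct (fun x hx => (hg x hx).continuousAt.continuousWithinAt)
      hΦ').intervalIntegrable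
  rw [← integral_eq_sub_of_hasDerivAt (fun x hx => (hg x hx).dotProduct (hΦ x hx))
    (hint₁.add hint₂), integral_add hint₁ hint₂]
  abel

theorem exists_derivative_eq_natDegree_le_eval_eq_zero {q : ℝ[X]} {p : ℕ} (hq : q.degree < p)
    (a : ℝ) : ∃ P : ℝ[X], derivative P = q ∧ P.natDegree ≤ p ∧ P.eval a = 0 := by
  rcases p with _ | m
  · exact ⟨0, by simp [show q = 0 by simpa using hq], by simp, by simp⟩
  suffices ∃ P : ℝ[X], derivative P = q ∧ P.natDegree ≤ m + 1 by
    obtain ⟨P, hP, hPdeg⟩ := this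
    exact ⟨P - C (P.eval a), by simp [hP], (natDegree_sub_le _ _).trans (max_le hPdeg (by simp)),
      by simp⟩
  refine induction_with_natDegree_le (fun q => ∃ P : ℝ[X], derivative P = q ∧ P.natDegree ≤ m + 1)
    m ⟨0, by simp, by simp⟩ (fun n r _ hn => ?_) (fun f g _ _ hf hg => ?_) q
    (natDegree_le_iff_degree_le.2 (Order.le_of_lt_succ hq))
  · refine ⟨C (r / (n + 1)) * X ^ (n + 1), ?_, (natDegree_C_mul_X_pow_le _ _).trans (by omega)⟩
    rw [derivative_C_mul_X_pow, Nat.add_sub_cancel, Nat.cast_add_one,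
      div_mul_cancel₀ _ (by positivity)]
  · obtain ⟨F, hF, hFdeg⟩ := hf
    obtain ⟨G, hG, hGdeg⟩ := hg
    exact ⟨F + G, by simp [hF, hG], (natDegree_add_le _ _).trans (max_le hFdeg hGdeg)⟩

@[simp]
theorem pev_C {d : ℕ} (c : Fin d → ℝ) (x : ℝ) : pev (fun i => C (c i)) x = c :=
  funext fun _ => eval_C

@[simp]
theorem pev_zero {d : ℕ} (x : ℝ) : pev (fun _ : Fin d => (0 : ℝ[X])) x = 0 :=
  funext fun _ => eval_zero

theorem hasDerivAt_pev {d : ℕ} (P : Fin d → ℝ[X]) (x : ℝ) :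
    HasDerivAt (pev P) (pev (fun i => derivative (P i)) x) x :=
  hasDerivAt_pi.2 fun i => (P i).hasDerivAt x

theorem continuous_pev {d : ℕ} (P : Fin d → ℝ[X]) : Continuous (pev P) :=
  continuous_pi fun i => (P i).continuous

theorem contDiff_pev {d : ℕ} (P : Fin d → ℝ[X]) : ContDiff ℝ 1 (pev P) :=
  contDiff_pi.2 fun i => by simpa [pev] using (P i).contDiff_aeval (𝕜 := ℝ) 1

theorem dotR_eq_dotProduct {d : ℕ} (a b : Fin d → ℝ) : dotR a b = a ⬝ᵥ b := rfl

section Nodes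

variable {d N : ℕ} {xp : ℕ → ℝ} {g : ℕ → Fin d → ℝ[X]}

@[simp]
theorem nodeMinus_succ (n : ℕ) : nodeMinus N xp g (n + 1) = pev (g n) (xp (n + 1)) := by
  simp [nodeMinus]

theorem nodeMinus_self (hN : N ≠ 0) : nodeMinus N xp g N = nodeMinus N xp g 0 := by
  simp [nodeMinus, hN]

theorem nodePlus_of_lt {n : ℕ} (hn : n < N) : nodePlus N xp g n = pev (g n) (xp n) :=
  if_neg hn.ne

theorem nodePlus_self (hN : N ≠ 0) : nodePlus N xp g N = nodePlus N xp g 0 := by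
  simp [nodePlus, hN.symm]

end Nodes

theorem integral_dotR_deriv_pev_sub_deriv {d : ℕ} {a b : ℝ} {O : Set ℝ} (hO : IsOpen O)
    (habO : Set.uIcc a b ⊆ O) {g : ℝ → Fin d → ℝ} (hg : ContDiffOn ℝ 1 g O)
    (P Φ : Fin d → ℝ[X]) :
    (∫ x in a..b, dotR (pev (fun i => derivative (P i)) x) (pev Φ x)) -
        ∫ x in a..b, dotR (deriv g x) (pev Φ x) =
      dotR (pev P b - g b) (pev Φ b) - dotR (pev P a - g a) (pev Φ a) -
        ∫ x in a..b, dotR (pev P x - g x) (pev (fun i => derivative (Φ i)) x) := by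
  have hg_deriv : ∀ x ∈ Set.uIcc a b, HasDerivAt g (deriv g x) x := fun x hx =>
    ((hg.contDiffAt (hO.mem_nhds (habO hx))).differentiableAt one_ne_zero).hasDerivAt
  have hg' : ContinuousOn (deriv g) (Set.uIcc a b) :=
    (hg.continuousOn_deriv_of_isOpen hO le_rfl).mono habO
  simp only [dotR_eq_dotProduct]
  rw [← integral_sub
    (((continuous_pev _).dotProduct (continuous_pev Φ)).intervalIntegrable a b)
    (hg'.dotProduct (continuous_pev Φ).continuousOn).intervalIntegrable]
  simp only [← sub_dotProduct]
  exact integral_dotProduct_deriv_eq (fun x hx => (hasDerivAt_pev P x).sub (hg_deriv x hx))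
    (fun x _ => hasDerivAt_pev Φ x) ((continuous_pev _).continuousOn.sub hg')
    (continuous_pev _).continuousOn

section FluxReconstruction

variable {d : ℕ} (f : (Fin d → ℝ) → Fin d → ℝ) (w : (Fin d → ℝ) → (Fin d → ℝ) → Fin d → ℝ)
  (N : ℕ) (xp : ℕ → ℝ) (uh fhat : ℕ → Fin d → ℝ[X])

noncomputable def nodeFlux (n : ℕ) : Fin d → ℝ :=
  f (w (nodeMinus N xp uh n) (nodePlus N xp uh n))

/-- Relation (4.4) of Definition 4.2, for the single test function `Φ`. -/
def FluxReconstructionRelation (Φ : ℕ → Fin d → ℝ[X]) : Prop :=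
  (∑ n ∈ range N, ∫ x in xp n..xp (n + 1),
      dotR (pev (fun i => derivative (fhat n i)) x) (pev (Φ n) x)) =
    (∑ n ∈ range N, ∫ x in xp n..xp (n + 1),
      dotR (deriv (fun y => f (pev (uh n) y)) x) (pev (Φ n) x)) +
    ∑ n ∈ range N,
      (dotR (nodeFlux f w N xp uh n) (nodeMinus N xp Φ n - nodePlus N xp Φ n) -
        (dotR (f (nodeMinus N xp uh n)) (nodeMinus N xp Φ n) -
          dotR (f (nodePlus N xp uh n)) (nodePlus N xp Φ n)))

variable {f w N xp uh fhat}

theorem nodeFlux_self (hN : N ≠ 0) : nodeFlux f w N xp uh N = nodeFlux f w N xp uh 0 := by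
  rw [nodeFlux, nodeFlux, nodeMinus_self hN, nodePlus_self hN]

theorem sum_flux_jump_eq_sum_cell_boundary (hN : N ≠ 0) (Φ : ℕ → Fin d → ℝ[X]) :
    ∑ n ∈ range N,
        (dotR (nodeFlux f w N xp uh n) (nodeMinus N xp Φ n - nodePlus N xp Φ n) -
          (dotR (f (nodeMinus N xp uh n)) (nodeMinus N xp Φ n) -
            dotR (f (nodePlus N xp uh n)) (nodePlus N xp Φ n))) =
      ∑ n ∈ range N,
        (dotR (nodeFlux f w N xp uh (n + 1) - f (pev (uh n) (xp (n + 1))))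
            (pev (Φ n) (xp (n + 1))) -
          dotR (nodeFlux f w N xp uh n - f (nodePlus N xp uh n)) (nodePlus N xp Φ n)) := by
  set M : ℕ → ℝ := fun n =>
    dotR (nodeFlux f w N xp uh n - f (nodeMinus N xp uh n)) (nodeMinus N xp Φ n) with hM
  have hrot : ∑ n ∈ range N, M (n + 1) = ∑ n ∈ range N, M n :=
    sum_range_succ_eq_of_periodic (by simp only [hM, nodeFlux_self hN, nodeMinus_self hN])
  calc _ = ∑ n ∈ range N,
        (M n - dotR (nodeFlux f w N xp uh n - f (nodePlus N xp uh n)) (nodePlus N xp Φ n)) := by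
        refine sum_congr rfl fun n _ => ?_
        simp only [hM, dotR_eq_dotProduct, dotProduct_sub, sub_dotProduct]
        ring
    _ = ∑ n ∈ range N,
        (M (n + 1) -
          dotR (nodeFlux f w N xp uh n - f (nodePlus N xp uh n)) (nodePlus N xp Φ n)) := by
        rw [sum_sub_distrib, sum_sub_distrib, hrot]
    _ = _ := by simp only [hM, nodeMinus_succ]

theorem sum_dotR_endpoint_residual_eq_sum_integral (hN : N ≠ 0)
    (hxmono : ∀ n < N, xp n < xp (n + 1)) {U : Set (Fin d → ℝ)} (hU : IsOpen U)
    (hf : ContDiffOn ℝ 1 f U)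
    (huhU : ∀ n < N, ∀ x ∈ Set.Icc (xp n) (xp (n + 1)), pev (uh n) x ∈ U)
    (hfhatbc : ∀ n < N, pev (fhat n) (xp n) = nodeFlux f w N xp uh n)
    {Φ : ℕ → Fin d → ℝ[X]} (hΦ : FluxReconstructionRelation f w N xp uh fhat Φ) :
    ∑ n ∈ range N, dotR (pev (fhat n) (xp (n + 1)) - nodeFlux f w N xp uh (n + 1))
        (pev (Φ n) (xp (n + 1))) =
      ∑ n ∈ range N, ∫ x in xp n..xp (n + 1),
        dotR (pev (fhat n) x - f (pev (uh n) x)) (pev (fun i => derivative (Φ n i)) x) := by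
  have hcell : ∀ n ∈ range N,
      (∫ x in xp n..xp (n + 1), dotR (pev (fun i => derivative (fhat n i)) x) (pev (Φ n) x)) -
          ∫ x in xp n..xp (n + 1), dotR (deriv (fun y => f (pev (uh n) y)) x) (pev (Φ n) x) =
        dotR (pev (fhat n) (xp (n + 1)) - f (pev (uh n) (xp (n + 1)))) (pev (Φ n) (xp (n + 1))) -
          dotR (nodeFlux f w N xp uh n - f (nodePlus N xp uh n)) (nodePlus N xp Φ n) -
          ∫ x in xp n..xp (n + 1),
            dotR (pev (fhat n) x - f (pev (uh n) x)) (pev (fun i => derivative (Φ n i)) x) := by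
    intro n hn
    rw [mem_range] at hn
    rw [integral_dotR_deriv_pev_sub_deriv (g := fun y => f (pev (uh n) y))
      (hU.preimage (continuous_pev (uh n)))
      (fun x hx => huhU n hn x (Set.uIcc_of_le (hxmono n hn).le ▸ hx))
      (hf.comp (contDiff_pev (uh n)).contDiffOn fun _ hx => hx),
      hfhatbc n hn, nodePlus_of_lt hn, nodePlus_of_lt hn]
  have hresidual : ∀ n ∈ range N,
      dotR (pev (fhat n) (xp (n + 1)) - nodeFlux f w N xp uh (n + 1)) (pev (Φ n) (xp (n + 1))) =
        dotR (pev (fhat n) (xp (n + 1)) - f (pev (uh n) (xp (n + 1)))) (pev (Φ n) (xp (n + 1))) -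
          dotR (nodeFlux f w N xp uh (n + 1) - f (pev (uh n) (xp (n + 1))))
            (pev (Φ n) (xp (n + 1))) := by
    intro n _
    simp only [dotR_eq_dotProduct, ← sub_dotProduct, sub_sub_sub_cancel_right]
  unfold FluxReconstructionRelation at hΦ
  rw [sum_flux_jump_eq_sum_cell_boundary hN, ← sub_eq_iff_eq_add', ← sum_sub_distrib,
    sum_congr rfl hcell] at hΦ
  rw [sum_congr rfl hresidual]
  simp only [sum_sub_distrib] at hΦ ⊢
  linarith

theorem pev_right_eq_nodeFlux (hN : N ≠ 0) (hxmono : ∀ n < N, xp n < xp (n + 1))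
    {U : Set (Fin d → ℝ)} (hU : IsOpen U) (hf : ContDiffOn ℝ 1 f U)
    (huhU : ∀ n < N, ∀ x ∈ Set.Icc (xp n) (xp (n + 1)), pev (uh n) x ∈ U)
    (hfhatbc : ∀ n < N, pev (fhat n) (xp n) = nodeFlux f w N xp uh n)
    (hconst : ∀ c : ℕ → Fin d → ℝ, FluxReconstructionRelation f w N xp uh fhat
      fun n i => C (c n i)) :
    ∀ n < N, pev (fhat n) (xp (n + 1)) = nodeFlux f w N xp uh (n + 1) := by
  set r := fun n => pev (fhat n) (xp (n + 1)) - nodeFlux f w N xp uh (n + 1)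
  have hsq : ∑ n ∈ range N, r n ⬝ᵥ r n = 0 := by
    simpa only [derivative_C, pev_C, pev_zero, dotR_eq_dotProduct, dotProduct_zero, integral_zero,
      sum_const_zero] using
      sum_dotR_endpoint_residual_eq_sum_integral hN hxmono hU hf huhU hfhatbc (hconst r)
  intro n hn
  rw [← sub_eq_zero, ← dotProduct_self_eq_zero]
  exact (sum_eq_zero_iff_of_nonneg fun m _ =>
    Fintype.sum_nonneg fun i => mul_self_nonneg (r m i)).1 hsq n (mem_range.2 hn)

theorem sum_integral_dotR_residual_eq_zero {p : ℕ} (hN : N ≠ 0)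
    (hxmono : ∀ n < N, xp n < xp (n + 1))
    {U : Set (Fin d → ℝ)} (hU : IsOpen U) (hf : ContDiffOn ℝ 1 f U)
    (huhU : ∀ n < N, ∀ x ∈ Set.Icc (xp n) (xp (n + 1)), pev (uh n) x ∈ U)
    (hfhatbc : ∀ n < N, pev (fhat n) (xp n) = nodeFlux f w N xp uh n)
    (hrel : ∀ Φ : ℕ → Fin d → ℝ[X], (∀ n i, (Φ n i).natDegree ≤ p) →
      FluxReconstructionRelation f w N xp uh fhat Φ)
    {φ : ℕ → Fin d → ℝ[X]} (hφ : ∀ n i, (φ n i).degree < p) :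
    ∑ n ∈ range N, ∫ x in xp n..xp (n + 1),
      dotR (pev (fhat n) x - f (pev (uh n) x)) (pev (φ n) x) = 0 := by
  choose Φ hΦ hΦdeg hΦ_zero using fun n i =>
    exists_derivative_eq_natDegree_le_eval_eq_zero (hφ n i) (xp (n + 1))
  have hΦ_right : ∀ n, pev (Φ n) (xp (n + 1)) = 0 := fun n => funext (hΦ_zero n)
  have hΦ' : ∀ n, (fun i => derivative (Φ n i)) = φ n := fun n => funext (hΦ n)
  simpa [hΦ_right, hΦ', dotR_eq_dotProduct] using
    (sum_dotR_endpoint_residual_eq_sum_integral hN hxmono hU hf huhU hfhatbc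
      (hrel Φ hΦdeg)).symm

end FluxReconstruction

theorem flux_reconstruction_continuity_and_orthogonality_general
    (d : ℕ) (N : ℕ) (hN : 1 ≤ N) (p : ℕ)
    (xp : ℕ → ℝ)
    (hxmono : ∀ n < N, xp n < xp (n + 1))
    (U : Set (Fin d → ℝ)) (hUopen : IsOpen U)
    (f : (Fin d → ℝ) → (Fin d → ℝ)) (hf : ContDiffOn ℝ 1 f U)
    (w : (Fin d → ℝ) → (Fin d → ℝ) → (Fin d → ℝ))
    -- the dG function u_h ∈ 𝕍_p, with values in U
    (uh : ℕ → Fin d → Polynomial ℝ)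
    (huhU : ∀ n < N, ∀ x ∈ Set.Icc (xp n) (xp (n + 1)), pev (uh n) x ∈ U)
    -- the reconstruction f̂ ∈ 𝕍_{p+1} and its defining properties (4.4), (4.5)
    (fhat : ℕ → Fin d → Polynomial ℝ)
    (hfhatdef : ∀ φ : ℕ → Fin d → Polynomial ℝ, (∀ n i, (φ n i).natDegree ≤ p) →
      (∑ n ∈ Finset.range N, ∫ x in xp n..xp (n + 1),
          dotR (pev (fun i => Polynomial.derivative (fhat n i)) x) (pev (φ n) x)) =
      (∑ n ∈ Finset.range N, ∫ x in xp n..xp (n + 1),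
          dotR (deriv (fun y => f (pev (uh n) y)) x) (pev (φ n) x)) +
      ∑ n ∈ Finset.range N,
        (dotR (f (w (nodeMinus N xp uh n) (nodePlus N xp uh n)))
            (nodeMinus N xp φ n - nodePlus N xp φ n) -
          (dotR (f (nodeMinus N xp uh n)) (nodeMinus N xp φ n) -
            dotR (f (nodePlus N xp uh n)) (nodePlus N xp φ n))))
    (hfhatbc : ∀ n < N,
      pev (fhat n) (xp n) = f (w (nodeMinus N xp uh n) (nodePlus N xp uh n))) :
    -- continuity on the periodic interval
    (∀ n < N, nodeMinus N xp fhat n = nodePlus N xp fhat n) ∧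
    -- right endpoint values
    (∀ n < N, pev (fhat n) (xp (n + 1)) =
      f (w (pev (uh n) (xp (n + 1))) (nodePlus N xp uh (n + 1)))) ∧
    -- orthogonality to 𝕍_{p-1}
    (∀ φ : ℕ → Fin d → Polynomial ℝ, (∀ n i, (φ n i).degree < (p : ℕ)) →
      (∑ n ∈ Finset.range N, ∫ x in xp n..xp (n + 1),
        dotR (pev (fhat n) x - f (pev (uh n) x)) (pev (φ n) x)) = 0) := by
  have hN0 : N ≠ 0 := Nat.one_le_iff_ne_zero.1 hN
  have hright := pev_right_eq_nodeFlux hN0 hxmono hUopen hf huhU hfhatbc fun c =>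
    hfhatdef _ fun _ _ => by simp
  refine ⟨fun n hn => ?_, fun n hn => by simpa [nodeFlux] using hright n hn,
    fun φ hφ => sum_integral_dotR_residual_eq_zero hN0 hxmono hUopen hf huhU hfhatbc hfhatdef hφ⟩
  rw [nodePlus_of_lt hn, hfhatbc n hn]
  rcases n with _ | m
  · obtain ⟨K, rfl⟩ := Nat.exists_eq_add_one_of_ne_zero hN0
    rw [← nodeMinus_self hN0, nodeMinus_succ, hright K K.lt_succ_self, nodeFlux_self hN0]
    rfl
  · rw [nodeMinus_succ, hright m (by omega)]
    rfl

/-- **Continuity and orthogonality of the flux reconstruction `f̂`** (Lemma 4.3 of the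
paper): if `f̂ ∈ 𝕍_{p+1}` satisfies the defining relations (4.4)–(4.5) of Definition 4.2,
then `f̂` is continuous on the periodic interval with
`f̂(x_{n+1}^-) = f(w(u_h(x_{n+1}^-), u_h(x_{n+1}^+)))`, and
`Σ_n ∫_{I_n} (f̂ - f∘u_h)·φ dx = 0` for all `φ ∈ 𝕍_{p-1}`. Piecewise polynomials in
`𝕍_q` are given by their cellwise polynomial components. -/
theorem flux_reconstruction_continuity_and_orthogonality
    (d : ℕ) (hd : 1 ≤ d) (N : ℕ) (hN : 1 ≤ N) (p : ℕ) (hp : 1 ≤ p)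
    (xp : ℕ → ℝ) (hx0 : xp 0 = 0) (hxN : xp N = 1)
    (hxmono : ∀ n < N, xp n < xp (n + 1))
    (U : Set (Fin d → ℝ)) (hUopen : IsOpen U) (hUconv : Convex ℝ U)
    (f : (Fin d → ℝ) → (Fin d → ℝ)) (hf : ContDiffOn ℝ 1 f U)
    (w : (Fin d → ℝ) → (Fin d → ℝ) → (Fin d → ℝ))
    (hwU : ∀ a ∈ U, ∀ b ∈ U, w a b ∈ U)
    -- the dG function u_h ∈ 𝕍_p, with values in U
    (uh : ℕ → Fin d → Polynomial ℝ) (huhdeg : ∀ n i, (uh n i).natDegree ≤ p)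
    (huhU : ∀ n < N, ∀ x ∈ Set.Icc (xp n) (xp (n + 1)), pev (uh n) x ∈ U)
    -- the reconstruction f̂ ∈ 𝕍_{p+1} and its defining properties (4.4), (4.5)
    (fhat : ℕ → Fin d → Polynomial ℝ) (hfhatdeg : ∀ n i, (fhat n i).natDegree ≤ p + 1)
    (hfhatdef : ∀ φ : ℕ → Fin d → Polynomial ℝ, (∀ n i, (φ n i).natDegree ≤ p) →
      (∑ n ∈ Finset.range N, ∫ x in xp n..xp (n + 1),
          dotR (pev (fun i => Polynomial.derivative (fhat n i)) x) (pev (φ n) x)) =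
      (∑ n ∈ Finset.range N, ∫ x in xp n..xp (n + 1),
          dotR (deriv (fun y => f (pev (uh n) y)) x) (pev (φ n) x)) +
      ∑ n ∈ Finset.range N,
        (dotR (f (w (nodeMinus N xp uh n) (nodePlus N xp uh n)))
            (nodeMinus N xp φ n - nodePlus N xp φ n) -
          (dotR (f (nodeMinus N xp uh n)) (nodeMinus N xp φ n) -
            dotR (f (nodePlus N xp uh n)) (nodePlus N xp φ n))))
    (hfhatbc : ∀ n < N,
      pev (fhat n) (xp n) = f (w (nodeMinus N xp uh n) (nodePlus N xp uh n))) :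
    -- continuity on the periodic interval
    (∀ n < N, nodeMinus N xp fhat n = nodePlus N xp fhat n) ∧
    -- right endpoint values
    (∀ n < N, pev (fhat n) (xp (n + 1)) =
      f (w (pev (uh n) (xp (n + 1))) (nodePlus N xp uh (n + 1)))) ∧
    -- orthogonality to 𝕍_{p-1}
    (∀ φ : ℕ → Fin d → Polynomial ℝ, (∀ n i, (φ n i).degree < (p : ℕ)) →
      (∑ n ∈ Finset.range N, ∫ x in xp n..xp (n + 1),
        dotR (pev (fhat n) x - f (pev (uh n) x)) (pev (φ n) x)) = 0) :=
  flux_reconstruction_continuity_and_orthogonality_general d N hN p xp hxmono U hUopen f hf w uh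
    huhU fhat hfhatdef hfhatbc
end

section
/- Let d ≥ 1, p ≥ 0, and let I_n = [x_n, x_{n+1}] with h_n := x_{n+1} − x_n > 0. Let v : I_n → ℝ^d have all components polynomial of degree ≤ p+1 and suppose ∫_{I_n} v(x) · φ(x) dx = 0 for every ℝ^d-valued φ whose components are polynomials of degree ≤ p−1. Then v(x) = α l_p^n(x) + β l_{p+1}^n(x) for all x ∈ I_n, where the coefficient vectors are α = ½( (−1)^p v(x_n) + v(x_{n+1}) ) and β = ½( (−1)^{p+1} v(x_n) + v(x_{n+1}) ). -/
/-!
Pull `v` back to the reference cell `[-1, 1]` along the affine map. There `l_0, …, l_{p+1}` are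
an orthogonal basis of the polynomials of degree `≤ p + 1`, so orthogonality to degree `< p`
leaves only the modes `l_p` and `l_{p+1}`, whose two coefficients are read off from the values
at `±1` using `l_k(1) = 1` and `l_k(-1) = (-1)^k`. The latter holds because `l_k(-X)` is
orthogonal to all lower degrees and has the leading coefficient of `(-1)^k l_k`, hence equals it.
-/

open Polynomial MeasureTheory intervalIntegral

namespace Polynomial

theorem intervalIntegrable_eval_mul_eval (q s : ℝ[X]) (a b : ℝ) :
    IntervalIntegrable (fun x => q.eval x * s.eval x) volume a b :=
  (q.continuous.mul s.continuous).intervalIntegrable a b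

noncomputable def l2Inner : LinearMap.BilinForm ℝ ℝ[X] :=
  LinearMap.mk₂ ℝ (fun q s => ∫ x in (-1 : ℝ)..1, q.eval x * s.eval x)
    (fun q₁ q₂ s => by
      simp only [eval_add, add_mul]
      exact integral_add (intervalIntegrable_eval_mul_eval ..)
        (intervalIntegrable_eval_mul_eval ..))
    (fun c q s => by
      simp only [eval_smul, smul_eq_mul, mul_assoc, intervalIntegral.integral_const_mul])
    (fun q s₁ s₂ => by
      simp only [eval_add, mul_add]
      exact integral_add (intervalIntegrable_eval_mul_eval ..)
        (intervalIntegrable_eval_mul_eval ..))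
    (fun c q s => by
      simp only [eval_smul, smul_eq_mul, mul_left_comm _ c, intervalIntegral.integral_const_mul])

theorem l2Inner_apply (q s : ℝ[X]) :
    l2Inner q s = ∫ x in (-1 : ℝ)..1, q.eval x * s.eval x := rfl

theorem l2Inner_comm (q s : ℝ[X]) : l2Inner q s = l2Inner s q := by
  simp only [l2Inner_apply, mul_comm]

theorem l2Inner_self_eq_zero {r : ℝ[X]} : l2Inner r r = 0 ↔ r = 0 := by
  refine ⟨fun h => ?_, fun h => by simp [h]⟩
  by_contra hr
  have hsq : ∀ᵐ x ∂volume.restrict (Set.Ioc (-1 : ℝ) 1), r.eval x * r.eval x = 0 :=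
    (integral_eq_zero_iff_of_le_of_nonneg_ae (by norm_num)
      (.of_forall fun x => mul_self_nonneg _) (intervalIntegrable_eval_mul_eval r r _ _)).1 h
  have hroots : ∀ᵐ x ∂volume.restrict (Set.Ioc (-1 : ℝ) 1), ¬ r.IsRoot x :=
    ae_restrict_of_ae <|
      measure_eq_zero_iff_ae_notMem.1 ((finite_setOfPred_isRoot hr).measure_zero _)
  have : (ae (volume.restrict (Set.Ioc (-1 : ℝ) 1))).NeBot :=
    ae_neBot.2 (by simp [Measure.restrict_eq_zero, Real.volume_Ioc])
  obtain ⟨x, hx₁, hx₂⟩ := (hsq.and hroots).exists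
  exact hx₂ (mul_self_eq_zero.1 hx₁)

theorem l2Inner_comp_neg_X (q s : ℝ[X]) :
    l2Inner (q.comp (-X)) s = l2Inner q (s.comp (-X)) := by
  simp only [l2Inner_apply, eval_comp, eval_neg, eval_X]
  simpa using integral_comp_neg (fun x => q.eval x * s.eval (-x)) (a := -1) (b := 1)

namespace Sequence

variable (S : Sequence ℝ)

theorem l2Inner_eq_zero_of_degree_lt {k : ℕ} {r : ℝ[X]} (hr : ∀ j < k, l2Inner (S j) r = 0)
    {q : ℝ[X]} (hq : q.degree < k) : l2Inner q r = 0 := by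
  have hspan : Submodule.span ℝ (S '' Set.Iio k) = degreeLT ℝ k :=
    S.span_degreeLT fun i _ => (leadingCoeff_ne_zero.2 (S.ne_zero i)).isUnit
  have hker : Submodule.span ℝ (S '' Set.Iio k) ≤ LinearMap.ker (l2Inner.flip r) :=
    Submodule.span_le.2 (by rintro _ ⟨j, hj, rfl⟩; exact hr j hj)
  exact hker (hspan ▸ mem_degreeLT.2 hq)

theorem eq_zero_of_l2Inner_eq_zero {k : ℕ} {r : ℝ[X]} (hr : r.degree < k)
    (horth : ∀ j < k, l2Inner (S j) r = 0) : r = 0 :=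
  l2Inner_self_eq_zero.1 (S.l2Inner_eq_zero_of_degree_lt horth hr)

variable {S}

theorem comp_neg_X_eq_of_pairwise_l2Inner (horth : Pairwise fun j k => l2Inner (S j) (S k) = 0)
    (k : ℕ) : (S k).comp (-X) = C ((-1 : ℝ) ^ k) * S k := by
  have hlt : ((S k).comp (-X) - C ((-1 : ℝ) ^ k) * S k).degree < k := by
    rw [← S.degree_eq k, ← degree_comp_neg_X (p := S k)]
    refine degree_sub_lt_left ?_ (by simp) ?_
    · rw [degree_comp_neg_X, degree_C_mul (by simp)]
    · rw [comp_neg_X_leadingCoeff_eq, leadingCoeff_mul, leadingCoeff_C, S.natDegree_eq]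
  rw [← sub_eq_zero]
  refine S.eq_zero_of_l2Inner_eq_zero hlt fun j hj => ?_
  have hreflect : l2Inner ((S j).comp (-X)) (S k) = 0 :=
    S.l2Inner_eq_zero_of_degree_lt (fun i hi => horth hi.ne)
      (by rw [degree_comp_neg_X, S.degree_eq]; exact_mod_cast hj)
  rw [map_sub, ← l2Inner_comp_neg_X, hreflect, ← smul_eq_C_mul, map_smul, horth hj.ne,
    smul_zero, sub_zero]

theorem eval_neg_one_of_pairwise_l2Inner (horth : Pairwise fun j k => l2Inner (S j) (S k) = 0)
    (hnorm : ∀ k, (S k).eval 1 = 1) (k : ℕ) : (S k).eval (-1) = (-1) ^ k := by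
  simpa [hnorm k] using congrArg (eval 1) (comp_neg_X_eq_of_pairwise_l2Inner horth k)

theorem exists_eq_smul_add_smul_of_l2Inner_eq_zero
    (horth : Pairwise fun j k => l2Inner (S j) (S k) = 0) {p : ℕ} {u : ℝ[X]}
    (hu : u.natDegree ≤ p + 1) (hperp : ∀ ψ : ℝ[X], ψ.degree < p → l2Inner u ψ = 0) :
    ∃ a b : ℝ, u = a • S p + b • S (p + 1) := by
  have hself : ∀ k, l2Inner (S k) (S k) ≠ 0 := fun k => l2Inner_self_eq_zero.not.2 (S.ne_zero k)
  set a := l2Inner (S p) u / l2Inner (S p) (S p)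
  set b := l2Inner (S (p + 1)) u / l2Inner (S (p + 1)) (S (p + 1))
  refine ⟨a, b, sub_eq_zero.1 (S.eq_zero_of_l2Inner_eq_zero (k := p + 2) ?_ fun j hj => ?_)⟩
  · have hmem : ∀ q : ℝ[X], q.natDegree ≤ p + 1 → q ∈ degreeLT ℝ (p + 2) := fun q hq =>
      mem_degreeLT.2 (degree_le_natDegree.trans_lt (by exact_mod_cast Nat.lt_succ_of_le hq))
    refine mem_degreeLT.1 (sub_mem (hmem u hu) (add_mem (Submodule.smul_mem _ _ (hmem _ ?_))
      (Submodule.smul_mem _ _ (hmem _ ?_)))) <;> simp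
  simp only [map_sub, map_add, map_smul, smul_eq_mul]
  obtain hj | rfl | rfl : j < p ∨ j = p ∨ j = p + 1 := by omega
  · rw [l2Inner_comm, hperp _ (by rw [S.degree_eq]; exact_mod_cast hj), horth hj.ne,
      horth (by omega : j ≠ p + 1)]
    simp
  · rw [horth (by omega : j ≠ j + 1), div_mul_cancel₀ _ (hself j)]
    simp
  · rw [horth (by omega : p + 1 ≠ p), div_mul_cancel₀ _ (hself (p + 1))]
    simp

theorem eq_endpoint_smul_add_smul_of_l2Inner_eq_zero
    (horth : Pairwise fun j k => l2Inner (S j) (S k) = 0) (hnorm : ∀ k, (S k).eval 1 = 1)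
    {p : ℕ} {u : ℝ[X]} (hu : u.natDegree ≤ p + 1)
    (hperp : ∀ ψ : ℝ[X], ψ.degree < p → l2Inner u ψ = 0) :
    u = (1 / 2 * ((-1) ^ p * u.eval (-1) + u.eval 1)) • S p +
      (1 / 2 * ((-1) ^ (p + 1) * u.eval (-1) + u.eval 1)) • S (p + 1) := by
  obtain ⟨a, b, rfl⟩ := exists_eq_smul_add_smul_of_l2Inner_eq_zero horth hu hperp
  simp only [eval_add, eval_smul, smul_eq_mul, hnorm, eval_neg_one_of_pairwise_l2Inner horth hnorm]
  rcases neg_one_pow_eq_or ℝ p with h | h <;> simp only [pow_succ, h] <;> module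

end Sequence

section AffineCell

variable {a b : ℝ}

noncomputable def cellToRef (a b : ℝ) : ℝ[X] := C (2 / (b - a)) * X + C ((a + b) / (a - b))

noncomputable def refToCell (a b : ℝ) : ℝ[X] := C ((b - a) / 2) * X + C ((a + b) / 2)

theorem eval_cellToRef (h : a ≠ b) (y : ℝ) :
    (cellToRef a b).eval y = 2 * ((y - a) / (b - a)) - 1 := by
  have : b - a ≠ 0 := sub_ne_zero.2 h.symm
  have : a - b ≠ 0 := sub_ne_zero.2 h
  simp only [cellToRef, eval_add, eval_mul, eval_C, eval_X]
  field_simp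
  ring

theorem eval_refToCell_eval_cellToRef (h : a ≠ b) (y : ℝ) :
    (refToCell a b).eval ((cellToRef a b).eval y) = y := by
  have : b - a ≠ 0 := sub_ne_zero.2 h.symm
  simp only [eval_cellToRef h, refToCell, eval_add, eval_mul, eval_C, eval_X]
  field_simp
  ring

@[simp]
theorem eval_refToCell_neg_one : (refToCell a b).eval (-1) = a := by
  simp only [refToCell, eval_add, eval_mul, eval_C, eval_X]
  ring

@[simp]
theorem eval_refToCell_one : (refToCell a b).eval 1 = b := by
  simp only [refToCell, eval_add, eval_mul, eval_C, eval_X]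
  ring

theorem degree_cellToRef (h : a ≠ b) : (cellToRef a b).degree = 1 :=
  degree_linear (div_ne_zero two_ne_zero (sub_ne_zero.2 h.symm))

theorem degree_comp_cellToRef (h : a ≠ b) (ψ : ℝ[X]) :
    (ψ.comp (cellToRef a b)).degree = ψ.degree := by
  rw [degree_comp (by rw [degree_cellToRef h]; exact zero_lt_one), degree_cellToRef h, mul_one]

theorem natDegree_comp_refToCell_le (V : ℝ[X]) :
    (V.comp (refToCell a b)).natDegree ≤ V.natDegree :=
  calc (V.comp (refToCell a b)).natDegree ≤ V.natDegree * (refToCell a b).natDegree :=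
        natDegree_comp_le
    _ ≤ V.natDegree * 1 := Nat.mul_le_mul_left _ (natDegree_linear_le (a := (b - a) / 2))
    _ = V.natDegree := mul_one _

theorem integral_comp_eval_cellToRef (h : a ≠ b) (f : ℝ → ℝ) :
    ∫ y in a..b, f ((cellToRef a b).eval y) = (b - a) / 2 * ∫ t in (-1 : ℝ)..1, f t := by
  have : b - a ≠ 0 := sub_ne_zero.2 h.symm
  have : a - b ≠ 0 := sub_ne_zero.2 h
  have hleft : 2 / (b - a) * a + (a + b) / (a - b) = -1 := by field_simp; ring
  have hright : 2 / (b - a) * b + (a + b) / (a - b) = 1 := by field_simp; ring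
  simp only [cellToRef, eval_add, eval_mul, eval_C, eval_X]
  rw [integral_comp_mul_add f (by positivity), hleft, hright, inv_div, smul_eq_mul]

theorem integral_eval_mul_eval_comp_cellToRef (h : a ≠ b) (V ψ : ℝ[X]) :
    ∫ y in a..b, V.eval y * (ψ.comp (cellToRef a b)).eval y =
      (b - a) / 2 * l2Inner (V.comp (refToCell a b)) ψ := by
  have hpull : ∀ y, V.eval y * (ψ.comp (cellToRef a b)).eval y =
      (V.comp (refToCell a b)).eval ((cellToRef a b).eval y) *
        ψ.eval ((cellToRef a b).eval y) := by
    intro y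
    rw [eval_comp, eval_comp, eval_refToCell_eval_cellToRef h]
  simp only [hpull, l2Inner_apply]
  exact integral_comp_eval_cellToRef h fun t => (V.comp (refToCell a b)).eval t * ψ.eval t

theorem l2Inner_comp_refToCell_eq_zero {ι : Type*} [Fintype ι] [DecidableEq ι] (h : a ≠ b)
    {p : ℕ} {V : ι → ℝ[X]} (horthV : ∀ φ : ι → ℝ[X], (∀ i, (φ i).degree < p) →
      ∫ x in a..b, ∑ i, (V i).eval x * (φ i).eval x = 0)
    (i : ι) {ψ : ℝ[X]} (hψ : ψ.degree < p) : l2Inner ((V i).comp (refToCell a b)) ψ = 0 := by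
  set φ : ι → ℝ[X] := Pi.single i (ψ.comp (cellToRef a b))
  have hφ : ∀ j, (φ j).degree < p := by
    intro j
    rcases eq_or_ne j i with rfl | hj
    · simpa [φ, degree_comp_cellToRef h] using hψ
    · simp [φ, hj]
  have hint := horthV φ hφ
  simp only [φ, Pi.single_apply, apply_ite, eval_zero, mul_zero, Finset.sum_ite_eq',
    Finset.mem_univ, if_true, integral_eval_mul_eval_comp_cellToRef h] at hint
  exact (mul_eq_zero.1 hint).resolve_left (div_ne_zero (sub_ne_zero.2 h.symm) two_ne_zero)

end AffineCell

end Polynomial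

theorem cell_orthogonal_legendre_representation_general
    (l : ℕ → Polynomial ℝ)
    (hdeg : ∀ k, (l k).natDegree = k)
    (horth : ∀ j k, j ≠ k → ∫ x in (-1:ℝ)..1, (l j).eval x * (l k).eval x = 0)
    (hnorm : ∀ k, (l k).eval 1 = 1)
    (d : ℕ) (p : ℕ)
    (xn xnp : ℝ) (hx : xn < xnp)
    (V : Fin d → Polynomial ℝ) (hV : ∀ i, (V i).natDegree ≤ p + 1)
    (horthV : ∀ φ : Fin d → Polynomial ℝ, (∀ i, (φ i).degree < (p : ℕ)) →
      (∫ x in xn..xnp, ∑ i, (V i).eval x * (φ i).eval x) = 0) :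
    ∀ x ∈ Set.Icc xn xnp, ∀ i,
      (V i).eval x =
        (1/2 * ((-1 : ℝ) ^ p * (V i).eval xn + (V i).eval xnp)) *
          (l p).eval (2 * ((x - xn) / (xnp - xn)) - 1) +
        (1/2 * ((-1 : ℝ) ^ (p + 1) * (V i).eval xn + (V i).eval xnp)) *
          (l (p + 1)).eval (2 * ((x - xn) / (xnp - xn)) - 1) := by
  intro x _ i
  let S : Sequence ℝ :=
    ⟨l, fun k => by rw [degree_eq_natDegree fun h => by simpa [h] using hnorm k, hdeg]⟩
  have hne : xn ≠ xnp := hx.ne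
  have hrepr := S.eq_endpoint_smul_add_smul_of_l2Inner_eq_zero (fun j k h => horth j k h) hnorm
    ((natDegree_comp_refToCell_le _).trans (hV i))
    fun _ => l2Inner_comp_refToCell_eq_zero hne horthV i
  have heval := congrArg (eval ((cellToRef xn xnp).eval x)) hrepr
  simp only [eval_comp, eval_refToCell_eval_cellToRef hne, eval_refToCell_neg_one,
    eval_refToCell_one, eval_add, eval_smul, smul_eq_mul] at heval
  rwa [eval_cellToRef hne] at heval

/-- **Legendre representation of an almost-orthogonal cell polynomial** (the formula
underlying (5.17) of the paper): an `ℝ^d`-valued polynomial `v` of degree `≤ p+1` on the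
cell `I_n = [x_n, x_{n+1}]` that is `L₂(I_n)`-orthogonal to all polynomials of degree
`≤ p-1` equals `α l_p^n + β l_{p+1}^n` with `α = ½((-1)^p v(x_n) + v(x_{n+1}))` and
`β = ½((-1)^{p+1} v(x_n) + v(x_{n+1}))`. Here `l k` is characterized as the `k`-th
Legendre polynomial on `(-1,1)` normalized by `l_k(1) = 1`, and "degree ≤ p-1" is
expressed as `degree < p`. -/
theorem cell_orthogonal_legendre_representation
    (l : ℕ → Polynomial ℝ)
    (hdeg : ∀ k, (l k).natDegree = k)
    (horth : ∀ j k, j ≠ k → ∫ x in (-1:ℝ)..1, (l j).eval x * (l k).eval x = 0)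
    (hnorm : ∀ k, (l k).eval 1 = 1)
    (d : ℕ) (hd : 1 ≤ d) (p : ℕ)
    (xn xnp : ℝ) (hx : xn < xnp)
    (V : Fin d → Polynomial ℝ) (hV : ∀ i, (V i).natDegree ≤ p + 1)
    (horthV : ∀ φ : Fin d → Polynomial ℝ, (∀ i, (φ i).degree < (p : ℕ)) →
      (∫ x in xn..xnp, ∑ i, (V i).eval x * (φ i).eval x) = 0) :
    ∀ x ∈ Set.Icc xn xnp, ∀ i,
      (V i).eval x =
        (1/2 * ((-1 : ℝ) ^ p * (V i).eval xn + (V i).eval xnp)) *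
          (l p).eval (2 * ((x - xn) / (xnp - xn)) - 1) +
        (1/2 * ((-1 : ℝ) ^ (p + 1) * (V i).eval xn + (V i).eval xnp)) *
          (l (p + 1)).eval (2 * ((x - xn) / (xnp - xn)) - 1) :=
  cell_orthogonal_legendre_representation_general l hdeg horth hnorm d p xn xnp hx V hV horthV
end
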